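/- From action models to arrow updates: given an action model E = (𝖠,→,pre), define the arrow update model U(E) with the same domain 𝖠 and arrows (e, pre(e))→_a(e', pre(e')) whenever (e,e') ∈ →_a. Then for every pointed model (M,s) with M,s ⊨ pre(e), the updated models (M⊗E,(s,e)) and (M*U(E),(s,e)) are bisimilar. Hence ⊨ [E,e]φ ↔ (pre(e) → [U(E),e]φ). -/

import Mathlib

namespace AAUML

/-- Formulas of arbitrary arrow update model logic over atoms `P` and agents `A`.
An arrow update model is encoded as a finite list of arrows
`(agent, source outcome, source condition, target outcome, target condition)`,
with outcomes drawn from `ℕ`; `upd U o φ` is `[U,o]φ` and `all φ` is `[↑]φ`. -/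
inductive Form (P A : Type) : Type where
  | atom : P → Form P A
  | neg  : Form P A → Form P A
  | and  : Form P A → Form P A → Form P A
  | box  : A → Form P A → Form P A
  | upd  : List (A × ℕ × Form P A × ℕ × Form P A) → ℕ → Form P A → Form P A
  | all  : Form P A → Form P A

/-- An arrow: agent, source outcome, source condition, target outcome, target condition. -/
abbrev Arrow (P A : Type) := A × ℕ × Form P A × ℕ × Form P A

/-- Formulas of basic multi-agent modal logic: no update modality, no quantifier. -/
inductive Form.Modal {P A : Type} : Form P A → Prop
  | atom (p : P) : Form.Modal (.atom p)
  | neg {φ : Form P A} : Form.Modal φ → Form.Modal (.neg φ)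
  | and {φ ψ : Form P A} : Form.Modal φ → Form.Modal ψ → Form.Modal (.and φ ψ)
  | box (a : A) {φ : Form P A} : Form.Modal φ → Form.Modal (.box a φ)

/-- Formulas of arrow update model logic (no arbitrary-update quantifier anywhere,
including inside the conditions of arrow update models). -/
inductive Form.NoQuant {P A : Type} : Form P A → Prop
  | atom (p : P) : Form.NoQuant (.atom p)
  | neg {φ : Form P A} : Form.NoQuant φ → Form.NoQuant (.neg φ)
  | and {φ ψ : Form P A} : Form.NoQuant φ → Form.NoQuant ψ → Form.NoQuant (.and φ ψ)
  | box (a : A) {φ : Form P A} : Form.NoQuant φ → Form.NoQuant (.box a φ)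
  | upd {U : List (Arrow P A)} (o : ℕ) {φ : Form P A} : Form.NoQuant φ →
      (∀ ar ∈ U, Form.NoQuant ar.2.2.1) → (∀ ar ∈ U, Form.NoQuant ar.2.2.2.2) →
      Form.NoQuant (.upd U o φ)

/-- Propositional formulas (no modalities at all). -/
inductive Form.Prp {P A : Type} : Form P A → Prop
  | atom (p : P) : Form.Prp (.atom p)
  | neg {φ : Form P A} : Form.Prp φ → Form.Prp (.neg φ)
  | and {φ ψ : Form P A} : Form.Prp φ → Form.Prp ψ → Form.Prp (.and φ ψ)

/-- A relational (Kripke) model. -/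
structure KModel (P A : Type) : Type 1 where
  World : Type
  R : A → World → World → Prop
  V : World → P → Prop

variable {P A : Type}

/-- Satisfaction for basic modal formulas (junk value `False` on updates/quantifiers;
only used on modal formulas). -/
def msat (M : KModel P A) : M.World → Form P A → Prop
  | s, .atom p => M.V s p
  | s, .neg φ => ¬ msat M s φ
  | s, .and φ ψ => msat M s φ ∧ msat M s ψ
  | s, .box a φ => ∀ t, M.R a s t → msat M t φ
  | _, .upd _ _ _ => False
  | _, .all _ => False

/-- Some arrow of `U` for agent `a` from outcome `o` to outcome `o'` has its (modal)
source condition true at `s` and its target condition true at `s'`. -/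
def marrowOK (M : KModel P A) (U : List (Arrow P A)) (a : A) (o o' : ℕ)
    (s s' : M.World) : Prop :=
  ∃ ψ ψ', (a, o, ψ, o', ψ') ∈ U ∧ msat M s ψ ∧ msat M s' ψ'

/-- All source and target conditions of `U` are basic modal formulas. -/
def ModalArrows (U : List (Arrow P A)) : Prop :=
  ∀ ar ∈ U, Form.Modal ar.2.2.1 ∧ Form.Modal ar.2.2.2.2

mutual
  /-- Satisfaction `M,s ⊨ φ`.  The case `upd U o φ` is interpreted in the product
  model `M*U` (inlined); `all φ` quantifies over all arrow update models with basic
  modal source and target conditions. -/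
  def Form.sat : (M : KModel P A) → M.World → Form P A → Prop
    | M, s, .atom p => M.V s p
    | M, s, .neg φ => ¬ Form.sat M s φ
    | M, s, .and φ ψ => Form.sat M s φ ∧ Form.sat M s ψ
    | M, s, .box a φ => ∀ t, M.R a s t → Form.sat M t φ
    | M, s, .upd U o φ =>
        Form.sat ⟨M.World × ℕ,
          fun a x y => M.R a x.1 y.1 ∧ satList M U a x.2 y.2 x.1 y.1,
          fun x p => M.V x.1 p⟩ (s, o) φ
    | M, s, .all φ => ∀ (U : List (Arrow P A)) (o : ℕ), ModalArrows U →
        Form.sat ⟨M.World × ℕ,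
          fun a x y => M.R a x.1 y.1 ∧ marrowOK M U a x.2 y.2 x.1 y.1,
          fun x p => M.V x.1 p⟩ (s, o) φ
  termination_by M s φ => sizeOf φ

  /-- Some arrow of the list, for agent `a`, from `o` to `o'`, has its source condition
  true at `s` and its target condition true at `s'`. -/
  def satList : (M : KModel P A) → List (Arrow P A) → A → ℕ → ℕ → M.World → M.World → Prop
    | _, [], _, _, _, _, _ => False
    | M, (b, o1, ψ, o2, ψ') :: rest, a, o, o', s, s' =>
        (b = a ∧ o1 = o ∧ o2 = o' ∧ Form.sat M s ψ ∧ Form.sat M s' ψ') ∨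
        satList M rest a o o' s s'
  termination_by M U a o o' s s' => sizeOf U
end

/-- The product `M*U` of a relational model and an arrow update model. -/
def prodModel (M : KModel P A) (U : List (Arrow P A)) : KModel P A :=
  ⟨M.World × ℕ,
   fun a x y => M.R a x.1 y.1 ∧ satList M U a x.2 y.2 x.1 y.1,
   fun x p => M.V x.1 p⟩

def Valid (φ : Form P A) : Prop := ∀ (M : KModel P A) (s : M.World), Form.sat M s φ

def Form.or (φ ψ : Form P A) : Form P A := .neg (.and (.neg φ) (.neg ψ))
def Form.imp (φ ψ : Form P A) : Form P A := .neg (.and φ (.neg ψ))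
def Form.dia (a : A) (φ : Form P A) : Form P A := .neg (.box a (.neg φ))
/-- `⟨U,o⟩φ` -/
def Form.diaUpd (U : List (Arrow P A)) (o : ℕ) (φ : Form P A) : Form P A :=
  .neg (.upd U o (.neg φ))
/-- `⟨↑⟩φ` -/
def Form.ex (φ : Form P A) : Form P A := .neg (.all (.neg φ))
/-- A canonical tautology. -/
def Form.top [Inhabited P] : Form P A := .neg (.and (.atom default) (.neg (.atom default)))
/-- Finite conjunction. -/
def Form.conj [Inhabited P] : List (Form P A) → Form P A
  | [] => Form.top
  | φ :: rest => .and φ (Form.conj rest)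

/-- `Z` is a bisimulation between `M` and `N`. -/
def IsBisim (M N : KModel P A) (Z : M.World → N.World → Prop) : Prop :=
  ∀ s s', Z s s' →
    (∀ p, M.V s p ↔ N.V s' p) ∧
    (∀ a t, M.R a s t → ∃ t', N.R a s' t' ∧ Z t t') ∧
    (∀ a t', N.R a s' t' → ∃ t, M.R a s t ∧ Z t t')

/-- Bisimilarity of pointed models. -/
def Bisimilar (M : KModel P A) (s : M.World) (N : KModel P A) (s' : N.World) : Prop :=
  ∃ Z, IsBisim M N Z ∧ Z s s'

/-- An action model: actions with accessibility relations and preconditions. -/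
structure AModel (P A : Type) : Type 1 where
  Action : Type
  rel : A → Action → Action → Prop
  pre : Action → Form P A

/-- The restricted modal product `M ⊗ E`. -/
def actProd (M : KModel P A) (E : AModel P A) : KModel P A :=
  ⟨{x : M.World × E.Action // Form.sat M x.1 (E.pre x.2)},
   fun a x y => M.R a x.1.1 y.1.1 ∧ E.rel a x.1.2 y.1.2,
   fun x p => M.V x.1.1 p⟩

/-- `M,s ⊨ [E,e]φ`: if the precondition of `e` holds at `s` then `φ` holds at `(s,e)`
in `M ⊗ E`. -/
def actSat (M : KModel P A) (E : AModel P A) (s : M.World) (e : E.Action)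
    (φ : Form P A) : Prop :=
  ∀ h : Form.sat M s (E.pre e), Form.sat (actProd M E) ⟨(s, e), h⟩ φ


/-- An arrow update model presented relationally (outcomes form an arbitrary type,
and `arr a o o' ψ ψ'` holds iff there is an `a`-arrow from `o` to `o'` with source
condition `ψ` and target condition `ψ'`). -/
structure RAUM (P A : Type) : Type 1 where
  Outcome : Type
  arr : A → Outcome → Outcome → Form P A → Form P A → Prop

/-- The product `M * U` for a relationally presented arrow update model. -/
def raumProd (M : KModel P A) (U : RAUM P A) : KModel P A :=
  ⟨M.World × U.Outcome,
   fun a x y => M.R a x.1 y.1 ∧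
     ∃ ψ ψ', U.arr a x.2 y.2 ψ ψ' ∧ Form.sat M x.1 ψ ∧ Form.sat M y.1 ψ',
   fun x p => M.V x.1 p⟩

/-- The arrow update model `U(E)` of an action model `E`: same domain, and an
`a`-arrow from `e` to `e'` with source condition `pre(e)` and target condition
`pre(e')` whenever `(e,e') ∈ →_a`. -/
def UofE (E : AModel P A) : RAUM P A :=
  ⟨E.Action, fun a e e' ψ ψ' => E.rel a e e' ∧ ψ = E.pre e ∧ ψ' = E.pre e'⟩

/-!
The map `(s, e) ↦ (s, e)` from `M ⊗ E` to `M * U(E)` is a bisimulation: an `a`-arrow of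
`M * U(E)` between `(s, e)` and `(t, e')` requires `pre(e)` at `s` and `pre(e')` at `t`,
i.e. it joins two worlds of `M ⊗ E`, and carries the same conditions `R_a` and `→_a`.
The equivalence of `[E,e]φ` with `pre(e) → [U(E),e]φ` then follows from invariance of
all formulas under bisimulation. For `[U,o]φ` and `[↑]φ` this holds because a
bisimulation `Z` lifts to `Z × (=)` on the products with an arrow update model, the arrow
conditions being themselves invariant.
-/

theorem Form.sizeOf_conds_lt_upd {ar : Arrow P A} {U : List (Arrow P A)} (hm : ar ∈ U)
    (o : ℕ) (φ : Form P A) :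
    sizeOf ar.2.2.1 < sizeOf (Form.upd U o φ) ∧
      sizeOf ar.2.2.2.2 < sizeOf (Form.upd U o φ) := by
  have h := List.sizeOf_lt_of_mem hm
  obtain ⟨b, o1, ψ, o2, ψ'⟩ := ar
  simp only [Prod.mk.sizeOf_spec] at h
  simp only [Form.upd.sizeOf_spec]
  omega

section Bisimulation

variable {M N : KModel P A} {Z : M.World → N.World → Prop}

/-- Both `prodModel M U` and the models quantified over by `Form.all` are of this form. -/
def condProd (M : KModel P A) (C : A → ℕ → ℕ → M.World → M.World → Prop) : KModel P A :=
  ⟨M.World × ℕ, fun a x y => M.R a x.1 y.1 ∧ C a x.2 y.2 x.1 y.1, fun x p => M.V x.1 p⟩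

theorem IsBisim.condProd (hZ : IsBisim M N Z)
    {C : A → ℕ → ℕ → M.World → M.World → Prop} {D : A → ℕ → ℕ → N.World → N.World → Prop}
    (hCD : ∀ a o o' s s' t t', Z s t → Z s' t' → (C a o o' s s' ↔ D a o o' t t')) :
    IsBisim (condProd M C) (condProd N D) (fun x y => Z x.1 y.1 ∧ x.2 = y.2) := by
  rintro ⟨s, o⟩ ⟨t, _⟩ ⟨hst, rfl⟩
  obtain ⟨hV, hforth, hback⟩ := hZ s t hst
  refine ⟨hV, ?_, ?_⟩
  · rintro a ⟨s', o'⟩ ⟨hR, hC⟩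
    obtain ⟨t', hR', hst'⟩ := hforth a s' hR
    exact ⟨(t', o'), ⟨hR', (hCD a o o' s s' t t' hst hst').mp hC⟩, hst', rfl⟩
  · rintro a ⟨t', o'⟩ ⟨hR', hD⟩
    obtain ⟨s', hR, hst'⟩ := hback a t' hR'
    exact ⟨(s', o'), ⟨hR, (hCD a o o' s s' t t' hst hst').mpr hD⟩, hst', rfl⟩

theorem IsBisim.msat_iff (hZ : IsBisim M N Z) :
    ∀ (φ : Form P A) {s : M.World} {t : N.World}, Z s t → (msat M s φ ↔ msat N t φ)
  | .atom p, s, t, hst => (hZ s t hst).1 p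
  | .neg φ, s, t, hst => not_congr (hZ.msat_iff φ hst)
  | .and φ ψ, s, t, hst => and_congr (hZ.msat_iff φ hst) (hZ.msat_iff ψ hst)
  | .box a φ, s, t, hst => by
      obtain ⟨-, hforth, hback⟩ := hZ s t hst
      constructor
      · intro h t' hR'
        obtain ⟨s', hR, hst'⟩ := hback a t' hR'
        exact (hZ.msat_iff φ hst').mp (h s' hR)
      · intro h s' hR
        obtain ⟨t', hR', hst'⟩ := hforth a s' hR
        exact (hZ.msat_iff φ hst').mpr (h t' hR')
  | .upd _ _ _, _, _, _ => Iff.rfl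
  | .all _, _, _, _ => Iff.rfl

theorem IsBisim.marrowOK_iff (hZ : IsBisim M N Z) (U : List (Arrow P A)) (a : A) (o o' : ℕ)
    {s s' : M.World} {t t' : N.World} (hst : Z s t) (hst' : Z s' t') :
    marrowOK M U a o o' s s' ↔ marrowOK N U a o o' t t' :=
  exists_congr fun ψ => exists_congr fun ψ' =>
    and_congr_right' (and_congr (hZ.msat_iff ψ hst) (hZ.msat_iff ψ' hst'))

theorem satList_congr (U : List (Arrow P A)) {s s' : M.World} {t t' : N.World}
    (h : ∀ ar ∈ U, (Form.sat M s ar.2.2.1 ↔ Form.sat N t ar.2.2.1) ∧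
        (Form.sat M s' ar.2.2.2.2 ↔ Form.sat N t' ar.2.2.2.2)) (a : A) (o o' : ℕ) :
    satList M U a o o' s s' ↔ satList N U a o o' t t' := by
  induction U with
  | nil => simp only [satList]
  | cons ar U ih =>
    obtain ⟨b, o1, ψ, o2, ψ'⟩ := ar
    obtain ⟨hψ, hψ'⟩ := h _ List.mem_cons_self
    simp only [satList]
    rw [hψ, hψ', ih fun ar hm => h ar (List.mem_cons_of_mem _ hm)]

theorem IsBisim.sat_iff : ∀ (φ : Form P A) {M N : KModel P A} {Z : M.World → N.World → Prop},
    IsBisim M N Z → ∀ {s : M.World} {t : N.World}, Z s t → (Form.sat M s φ ↔ Form.sat N t φ)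
  | .atom p, _, _, _, hZ, s, t, hst => by simpa only [Form.sat] using (hZ s t hst).1 p
  | .neg φ, _, _, _, hZ, _, _, hst => by simp only [Form.sat]; rw [hZ.sat_iff φ hst]
  | .and φ ψ, _, _, _, hZ, _, _, hst => by
      simp only [Form.sat]; rw [hZ.sat_iff φ hst, hZ.sat_iff ψ hst]
  | .box a φ, _, _, _, hZ, s, t, hst => by
      obtain ⟨-, hforth, hback⟩ := hZ s t hst
      simp only [Form.sat]
      constructor
      · intro h t' hR'
        obtain ⟨s', hR, hst'⟩ := hback a t' hR'
        exact (hZ.sat_iff φ hst').mp (h s' hR)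
      · intro h s' hR
        obtain ⟨t', hR', hst'⟩ := hforth a s' hR
        exact (hZ.sat_iff φ hst').mpr (h t' hR')
  | .upd U o φ, M, N, _, hZ, _, _, hst => by
      have hU := hZ.condProd (C := satList M U) (D := satList N U)
        fun a o o' _ _ _ _ hst hst' => satList_congr U
          (fun ar _ => ⟨hZ.sat_iff ar.2.2.1 hst, hZ.sat_iff ar.2.2.2.2 hst'⟩) a o o'
      simp only [Form.sat]
      exact hU.sat_iff φ ⟨hst, rfl⟩
  | .all φ, _, _, _, hZ, _, _, hst => by
      simp only [Form.sat]
      refine forall_congr' fun U => forall_congr' fun o => imp_congr_right fun _ => ?_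
      exact (hZ.condProd fun a o o' _ _ _ _ hst hst' =>
        hZ.marrowOK_iff U a o o' hst hst').sat_iff φ ⟨hst, rfl⟩
  termination_by φ => sizeOf φ
  decreasing_by
    all_goals simp_wf
    all_goals first
      | omega
      | (have := Form.sizeOf_conds_lt_upd ‹_ ∈ U› o φ
         simp only [Form.upd.sizeOf_spec, sizeOf_nat] at this
         omega)

end Bisimulation

theorem isBisim_actProd_raumProd (M : KModel P A) (E : AModel P A) :
    IsBisim (actProd M E) (raumProd M (UofE E)) (fun x y => x.1 = y) := by
  rintro x _ rfl
  refine ⟨fun p => Iff.rfl, ?_, ?_⟩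
  · rintro a y ⟨hR, hrel⟩
    exact ⟨y.1, ⟨hR, E.pre x.1.2, E.pre y.1.2, ⟨hrel, rfl, rfl⟩, x.2, y.2⟩, rfl⟩
  · rintro a t' ⟨hR, ψ, ψ', ⟨hrel, rfl, rfl⟩, -, hpre⟩
    exact ⟨⟨t', hpre⟩, ⟨hR, hrel⟩, rfl⟩

/-- for every pointed model `(M,s)` with `M,s ⊨ pre(e)`, the updated
models `(M⊗E,(s,e))` and `(M*U(E),(s,e))` are bisimilar; hence
`⊨ [E,e]φ ↔ (pre(e) → [U(E),e]φ)`. -/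
theorem action_to_arrow (P A : Type) (E : AModel P A) (e : E.Action) :
    (∀ (M : KModel P A) (s : M.World) (h : Form.sat M s (E.pre e)),
      Bisimilar (actProd M E) ⟨(s, e), h⟩ (raumProd M (UofE E)) (s, e)) ∧
    (∀ (φ : Form P A) (M : KModel P A) (s : M.World),
      actSat M E s e φ ↔
        (Form.sat M s (E.pre e) → Form.sat (raumProd M (UofE E)) (s, e) φ)) :=
  ⟨fun M _ _ => ⟨_, isBisim_actProd_raumProd M E, rfl⟩,
   fun φ M _ => forall_congr' fun _ => (isBisim_actProd_raumProd M E).sat_iff φ rfl⟩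

end AAUML
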